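/- arXiv:0911.4977 — 2 statements merged into one kernel-verified Lean document; each statement's English description precedes it below -/
import Mathlib

section
/- Let μ be a complex regular Borel measure on ℝ with Fourier transform μ̂(r) = ∫ e^{-irx} dμ(x). Let (Iₙ) be a sequence of intervals Iₙ = [aₙ, bₙ] with lengths lₙ = bₙ - aₙ → ∞. Then for every x₀ ∈ ℝ, μ({x₀}) = lim_{n→∞} (1/lₙ) ∫_{Iₙ} e^{i r x₀} μ̂(r) dr. -/
/-!
By Fubini, the averaged integral equals `∫ Kₙ(x₀ - x) f(x) dν(x)` with the kernel
`Kₙ(t) = (1/lₙ) ∫_{Iₙ} e^{irt} dr`. It has modulus at most `1`, equals `1` at `t = 0`, and is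
`O(1 / (lₙ |t|))` for `t ≠ 0`, so dominated convergence gives `∫ 1_{x₀} f dν = μ({x₀})`.
-/

open MeasureTheory Filter Complex Topology

lemma norm_exp_I_mul_ofReal_mul_ofReal (r t : ℝ) : ‖exp (I * r * t)‖ = 1 := by
  rw [mul_assoc, ← ofReal_mul, norm_exp_I_mul_ofReal]

lemma norm_intervalIntegral_exp_I_mul_le (a b t : ℝ) :
    ‖∫ r in a..b, exp (I * r * t)‖ ≤ |b - a| := by
  simpa using intervalIntegral.norm_integral_le_of_norm_le_const (C := 1) (a := a) (b := b)
    (f := fun r : ℝ => exp (I * r * t)) fun r _ => (norm_exp_I_mul_ofReal_mul_ofReal r t).le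

lemma norm_intervalIntegral_exp_I_mul_le_of_ne_zero (a b : ℝ) {t : ℝ} (ht : t ≠ 0) :
    ‖∫ r in a..b, exp (I * r * t)‖ ≤ 2 / |t| := by
  have hc : I * t ≠ 0 := mul_ne_zero I_ne_zero (ofReal_ne_zero.2 ht)
  calc ‖∫ r in a..b, exp (I * r * t)‖
      = ‖(exp (I * t * b) - exp (I * t * a)) / (I * t)‖ := by
        rw [← integral_exp_mul_complex hc]; congr 2; ext r; ring_nf
    _ ≤ 2 / |t| := by
        rw [norm_div, norm_mul, norm_I, one_mul, norm_real, Real.norm_eq_abs]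
        gcongr
        exact (norm_sub_le _ _).trans (by
          rw [norm_exp_I_mul_ofReal_mul_ofReal, norm_exp_I_mul_ofReal_mul_ofReal]; norm_num)

lemma norm_average_intervalIntegral_exp_I_mul_le_one (a b t : ℝ) :
    ‖(1 / ((b - a : ℝ) : ℂ)) * ∫ r in a..b, exp (I * r * t)‖ ≤ 1 := by
  rw [norm_mul, norm_div, norm_one, norm_real, Real.norm_eq_abs, one_div]
  calc |b - a|⁻¹ * ‖∫ r in a..b, exp (I * r * t)‖ ≤ |b - a|⁻¹ * |b - a| := by
        gcongr; exact norm_intervalIntegral_exp_I_mul_le a b t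
    _ ≤ 1 := inv_mul_le_one_of_le₀ le_rfl (abs_nonneg _)

lemma tendsto_average_intervalIntegral_exp_I_mul {a b : ℕ → ℝ}
    (hl : Tendsto (fun n => b n - a n) atTop atTop) (t : ℝ) :
    Tendsto (fun n => (1 / ((b n - a n : ℝ) : ℂ)) * ∫ r in a n..b n, exp (I * r * t)) atTop
      (𝓝 (({0} : Set ℝ).indicator 1 t)) := by
  by_cases ht : t = 0
  · subst ht
    refine tendsto_const_nhds.congr' ?_
    filter_upwards [hl.eventually_gt_atTop 0] with n hn
    have hne : ((b n : ℂ) - a n) ≠ 0 := by exact_mod_cast hn.ne'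
    simp [hne]
  · rw [Set.indicator_of_notMem (by simpa using ht)]
    refine squeeze_zero_norm' ?_
      (by simpa using (tendsto_inv_atTop_zero.comp hl).mul_const (2 / |t|))
    filter_upwards [hl.eventually_gt_atTop 0] with n hn
    rw [norm_mul, norm_div, norm_one, norm_real, Real.norm_eq_abs, abs_of_pos hn, one_div]
    gcongr
    exact norm_intervalIntegral_exp_I_mul_le_of_ne_zero _ _ ht

lemma intervalIntegral_exp_I_mul_mul_integral_eq {ν : Measure ℝ} [SFinite ν] {f : ℝ → ℂ}
    (hf : Integrable f ν) (a b x₀ : ℝ) :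
    ∫ r in a..b, exp (I * r * x₀) * ∫ x, exp (-(I * r * x)) * f x ∂ν
      = ∫ x, (∫ r in a..b, exp (I * r * (x₀ - x : ℝ))) * f x ∂ν := by
  have hexp (r x : ℝ) : exp (I * r * x₀) * exp (-(I * r * x)) = exp (I * r * (x₀ - x : ℝ)) := by
    rw [← exp_add]; push_cast; ring_nf
  have hint : Integrable (Function.uncurry fun r x : ℝ => exp (I * r * (x₀ - x : ℝ)) * f x)
      ((volume.restrict (Set.uIoc a b)).prod ν) := by
    have : IsFiniteMeasure (volume.restrict (Set.uIoc a b)) :=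
      isFiniteMeasure_restrict.2 measure_Ioc_lt_top.ne
    refine ((integrable_const (1 : ℝ)).mul_prod hf.norm).mono' ?_ (.of_forall fun ⟨r, x⟩ => ?_)
    · exact (by fun_prop : Continuous fun p : ℝ × ℝ => exp (I * p.1 * (x₀ - p.2 : ℝ)))
        |>.aestronglyMeasurable.mul hf.1.comp_snd
    · rw [Function.uncurry_apply_pair, norm_mul, one_mul, norm_exp_I_mul_ofReal_mul_ofReal,
        one_mul]
  calc ∫ r in a..b, exp (I * r * x₀) * ∫ x, exp (-(I * r * x)) * f x ∂ν
      = ∫ r in a..b, ∫ x, exp (I * r * (x₀ - x : ℝ)) * f x ∂ν := by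
        simp_rw [← integral_const_mul, ← mul_assoc, hexp]
    _ = ∫ x, (∫ r in a..b, exp (I * r * (x₀ - x : ℝ))) * f x ∂ν := by
        rw [intervalIntegral_integral_swap hint]
        simp_rw [intervalIntegral.integral_mul_const]

theorem stmt0_general (ν : Measure ℝ) [IsFiniteMeasure ν] (f : ℝ → ℂ)
    (hf : Integrable f ν) (a b : ℕ → ℝ)
    (hl : Tendsto (fun n => b n - a n) atTop atTop) (x₀ : ℝ) :
    Tendsto (fun n => (1 / ((b n - a n : ℝ) : ℂ)) *
        ∫ r in a n..b n, Complex.exp (Complex.I * r * x₀) *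
          ∫ x, Complex.exp (-(Complex.I * r * x)) * f x ∂ν)
      atTop (nhds (∫ x in ({x₀} : Set ℝ), f x ∂ν)) := by
  simp_rw [intervalIntegral_exp_I_mul_mul_integral_eq hf, ← integral_const_mul, ← mul_assoc]
  rw [← integral_indicator (measurableSet_singleton x₀)]
  refine tendsto_integral_of_dominated_convergence (fun x => ‖f x‖) (fun n => ?_) hf.norm
    (fun n => .of_forall fun x => ?_) (.of_forall fun x => ?_)
  · exact (by fun_prop : Continuous fun x : ℝ => (1 / ((b n - a n : ℝ) : ℂ)) *
      ∫ r in a n..b n, exp (I * r * (x₀ - x : ℝ))).aestronglyMeasurable.mul hf.1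
  · rw [norm_mul]
    exact mul_le_of_le_one_left (norm_nonneg _)
      (norm_average_intervalIntegral_exp_I_mul_le_one _ _ _)
  · have hind : ({x₀} : Set ℝ).indicator f x = ({0} : Set ℝ).indicator 1 (x₀ - x) * f x := by
      by_cases hx : x = x₀
      · simp [hx]
      · rw [Set.indicator_of_notMem (by simpa using hx),
          Set.indicator_of_notMem (by simpa [sub_eq_zero] using Ne.symm hx), zero_mul]
    rw [hind]
    exact (tendsto_average_intervalIntegral_exp_I_mul hl (x₀ - x)).mul_const (f x)

/-- A complex regular Borel measure on ℝ is represented as a density `f`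
(integrable) with respect to a finite regular positive measure `ν`.  Its Fourier–Stieltjes
transform is `μ̂(r) = ∫ e^{-irx} f(x) dν(x)`.  If `Iₙ = [aₙ, bₙ]` with lengths
`lₙ = bₙ - aₙ → ∞`, then for every `x₀ ∈ ℝ`,
`μ({x₀}) = lim_n (1/lₙ) ∫_{Iₙ} e^{i r x₀} μ̂(r) dr`. -/
theorem stmt0 (ν : Measure ℝ) [IsFiniteMeasure ν] [ν.Regular] (f : ℝ → ℂ)
    (hf : Integrable f ν) (a b : ℕ → ℝ) (hab : ∀ n, a n ≤ b n)
    (hl : Tendsto (fun n => b n - a n) atTop atTop) (x₀ : ℝ) :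
    Tendsto (fun n => (1 / ((b n - a n : ℝ) : ℂ)) *
        ∫ r in a n..b n, Complex.exp (Complex.I * r * x₀) *
          ∫ x, Complex.exp (-(Complex.I * r * x)) * f x ∂ν)
      atTop (nhds (∫ x in ({x₀} : Set ℝ), f x ∂ν)) :=
  stmt0_general ν f hf a b hl x₀
end

section
/- For ν, μ, ρ ∈ ℂ with Re(1 ± ν ± μ - ρ) > 0 (all four sign combinations), one has 2^{ρ+2} Γ(1 - ρ) ∫_0^∞ K_ν(r) K_μ(r) r^{-ρ} dr = Γ((1+ν+μ-ρ)/2) Γ((1+ν-μ-ρ)/2) Γ((1-ν+μ-ρ)/2) Γ((1-ν-μ-ρ)/2). -/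
/-!
Write `K_ν(r) = ½ ∫_ℝ e^{-r cosh t} e^{ν t} dt`. Then `K_ν(r) K_μ(r)` is an integral over `ℝ²`, and
the substitution `t = x + y`, `u = x - y` turns `cosh t + cosh u` into `2 cosh x cosh y`.
Integrating in `r` first (Fubini), the Mellin transform `∫_0^∞ r^{s-1} e^{-c r} dr = Γ(s) c^{-s}`,
`s = 1 - ρ`, leaves `(2 cosh x cosh y)^{-s} e^{(ν+μ) x + (ν-μ) y}`, so the double integral
factors into two integrals `∫_ℝ e^{a x} cosh(x)^{-s} dx`. Each of these is a beta integral
under the substitution `t = 1 / (1 + e^{-2x}) = eˣ / (2 cosh x)`.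
-/

open MeasureTheory Complex

/-- The modified Bessel function of the second kind, via its integral representation
`K_ν(z) = ∫_0^∞ e^{-z cosh t} cosh(ν t) dt` (for `z > 0`). -/
noncomputable def besselK (ν : ℂ) (z : ℝ) : ℂ :=
  ∫ t in Set.Ioi (0 : ℝ), Complex.exp (-(z : ℂ) * Real.cosh t) * Complex.cosh (ν * t)

open Set

lemma ofReal_cpow_eq_exp {t : ℝ} (ht : 0 < t) (w : ℂ) :
    (t : ℂ) ^ w = exp (Real.log t * w) := by
  rw [cpow_def_of_ne_zero (ofReal_ne_zero.2 ht.ne'), ofReal_log ht.le]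

lemma Real.log_sigmoid_two_mul (x : ℝ) :
    Real.log (Real.sigmoid (2 * x)) = x - Real.log 2 - Real.log (Real.cosh x) := by
  have hσ : Real.sigmoid (2 * x) = Real.exp x / (2 * Real.cosh x) := by
    rw [Real.sigmoid_def, Real.cosh_eq, eq_div_iff (by positivity), ← div_eq_inv_mul,
      div_eq_iff (by positivity), mul_add, mul_one, ← Real.exp_add]
    ring_nf
  rw [hσ, Real.log_div (Real.exp_pos x).ne' (by positivity), Real.log_mul two_ne_zero
    (Real.cosh_pos x).ne', Real.log_exp]
  ring

lemma hasDerivAt_sigmoid_two_mul (x : ℝ) :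
    HasDerivAt (fun x => Real.sigmoid (2 * x))
      (2 * (Real.sigmoid (2 * x) * Real.sigmoid (2 * -x))) x := by
  refine ((Real.hasDerivAt_sigmoid (2 * x)).comp x ((hasDerivAt_id x).const_mul 2)).congr_deriv ?_
  rw [mul_neg, Real.sigmoid_neg]
  ring

lemma image_sigmoid_two_mul : (fun x => Real.sigmoid (2 * x)) '' univ = Ioo 0 1 := by
  rw [image_univ, ← Real.range_sigmoid, range_comp' Real.sigmoid (2 * ·),
    (mul_left_surjective₀ two_ne_zero).range_eq, image_univ]

lemma abs_deriv_smul_betaIntegrand_comp_sigmoid_two_mul (a s : ℂ) (x : ℝ) :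
    |2 * (Real.sigmoid (2 * x) * Real.sigmoid (2 * -x))| •
        ((Real.sigmoid (2 * x) : ℂ) ^ ((s + a) / 2 - 1) *
          (1 - (Real.sigmoid (2 * x) : ℂ)) ^ ((s - a) / 2 - 1)) =
      2 ^ (1 - s) * (exp (a * x) * (Real.cosh x : ℂ) ^ (-s)) := by
  have hpos : ∀ y, 0 < Real.sigmoid (2 * y) := fun y => Real.sigmoid_pos _
  have hneg : 1 - (Real.sigmoid (2 * x) : ℂ) = (Real.sigmoid (2 * -x) : ℂ) := by
    rw [mul_neg, Real.sigmoid_neg]; push_cast; ring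
  rw [abs_of_pos (by have := hpos x; have := hpos (-x); positivity), hneg, Complex.real_smul,
    show (2 : ℝ) * _ = Real.exp (Real.log 2) * _ by rw [Real.exp_log two_pos],
    ofReal_cpow_eq_exp (hpos x), ofReal_cpow_eq_exp (hpos (-x)),
    cpow_def_of_ne_zero two_ne_zero, ← ofReal_ofNat, ← ofReal_log zero_le_two,
    ofReal_cpow_eq_exp (Real.cosh_pos x),
    ← Real.exp_log (hpos x), ← Real.exp_log (hpos (-x))]
  simp only [Real.log_exp, Real.log_sigmoid_two_mul, Real.cosh_neg]
  push_cast
  simp only [← exp_add]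
  congr 1
  ring

lemma re_half_add_pos {a s : ℂ} (h : |a.re| < s.re) : 0 < ((s + a) / 2).re := by
  rw [div_ofNat_re, add_re]; linarith [neg_abs_le a.re]

lemma re_half_sub_pos {a s : ℂ} (h : |a.re| < s.re) : 0 < ((s - a) / 2).re := by
  rw [div_ofNat_re, sub_re]; linarith [le_abs_self a.re]

lemma injOn_sigmoid_two_mul : InjOn (fun x => Real.sigmoid (2 * x)) univ :=
  (Real.sigmoid_strictMono.comp (strictMono_mul_left_of_pos two_pos)).injective.injOn

lemma integrable_exp_mul_cosh_cpow {a s : ℂ} (h : |a.re| < s.re) :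
    Integrable fun x : ℝ => exp (a * x) * (Real.cosh x : ℂ) ^ (-s) := by
  have hB := (intervalIntegrable_iff_integrableOn_Ioo_of_le zero_le_one).1
    (betaIntegral_convergent (re_half_add_pos h) (re_half_sub_pos h))
  rw [← image_sigmoid_two_mul, integrableOn_image_iff_integrableOn_abs_deriv_smul
    MeasurableSet.univ (fun x _ => (hasDerivAt_sigmoid_two_mul x).hasDerivWithinAt)
    injOn_sigmoid_two_mul] at hB
  simp_rw [abs_deriv_smul_betaIntegrand_comp_sigmoid_two_mul, integrableOn_univ] at hB
  exact (integrable_const_mul_iff (Ne.isUnit (by simp)) _).1 hB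

lemma Gamma_mul_integral_exp_mul_cosh_cpow {a s : ℂ} (h : |a.re| < s.re) :
    Gamma s * ∫ x : ℝ, exp (a * x) * (Real.cosh x : ℂ) ^ (-s) =
      2 ^ (s - 1) * (Gamma ((s + a) / 2) * Gamma ((s - a) / 2)) := by
  have hβ : betaIntegral ((s + a) / 2) ((s - a) / 2) =
      2 ^ (1 - s) * ∫ x : ℝ, exp (a * x) * (Real.cosh x : ℂ) ^ (-s) := by
    rw [betaIntegral, intervalIntegral.integral_of_le zero_le_one, integral_Ioc_eq_integral_Ioo,
      ← image_sigmoid_two_mul, integral_image_eq_integral_abs_deriv_smul MeasurableSet.univ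
        (fun x _ => (hasDerivAt_sigmoid_two_mul x).hasDerivWithinAt) injOn_sigmoid_two_mul,
      setIntegral_univ]
    simp_rw [abs_deriv_smul_betaIntegrand_comp_sigmoid_two_mul]
    exact integral_const_mul _ _
  rw [Gamma_mul_Gamma_eq_betaIntegral (re_half_add_pos h) (re_half_sub_pos h),
    show (s + a) / 2 + (s - a) / 2 = s by ring, hβ, mul_left_comm, ← mul_assoc (2 ^ (s - 1)),
    ← cpow_add _ _ two_ne_zero]
  simp

lemma integral_eq_integral_Ioi_add_comp_neg {E : Type*} [NormedAddCommGroup E] [NormedSpace ℝ E]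
    {f : ℝ → E} (hf : Integrable f) : ∫ x, f x = ∫ x in Ioi 0, (f x + f (-x)) := by
  rw [integral_add hf.integrableOn hf.comp_neg.integrableOn, integral_comp_neg_Ioi, neg_zero,
    add_comm, intervalIntegral.integral_Iic_add_Ioi hf.integrableOn hf.integrableOn]

lemma Real.exp_neg_le_factorial_div_pow {y : ℝ} (hy : 0 < y) (n : ℕ) :
    Real.exp (-y) ≤ n.factorial / y ^ n := by
  rw [Real.exp_neg, inv_le_iff_one_le_mul₀ (Real.exp_pos y), ← div_le_iff₀' (by positivity),
    one_div_div]
  exact Real.pow_div_factorial_le_exp y hy.le n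

lemma integrable_exp_neg_mul_cosh_mul_exp {r : ℝ} (hr : 0 < r) (ν : ℂ) :
    Integrable fun t : ℝ => exp (-(r : ℂ) * Real.cosh t) * exp (ν * t) := by
  obtain ⟨n, hn⟩ := exists_nat_gt |ν.re|
  have hJ := integrable_exp_mul_cosh_cpow (a := ν) (s := n) (by simpa using hn)
  refine (hJ.norm.const_mul (n.factorial / r ^ n)).mono' (by fun_prop) (ae_of_all _ fun t => ?_)
  have hc := Real.cosh_pos t
  have hdecay := Real.exp_neg_le_factorial_div_pow (mul_pos hr hc) n
  simp only [norm_mul, norm_exp, norm_cpow_eq_rpow_re_of_pos hc, neg_re, natCast_re,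
    Real.rpow_neg hc.le, Real.rpow_natCast, neg_mul, mul_re, ofReal_re, ofReal_im, mul_zero,
    sub_zero]
  calc Real.exp (-(r * Real.cosh t)) * Real.exp (ν.re * t)
      ≤ n.factorial / (r * Real.cosh t) ^ n * Real.exp (ν.re * t) := by gcongr
    _ = n.factorial / r ^ n * (Real.exp (ν.re * t) * (Real.cosh t ^ n)⁻¹) := by
      rw [mul_pow]; field_simp

lemma besselK_eq_half_integral (ν : ℂ) {r : ℝ} (hr : 0 < r) :
    besselK ν r = 2⁻¹ * ∫ t : ℝ, exp (-(r : ℂ) * Real.cosh t) * exp (ν * t) := by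
  rw [integral_eq_integral_Ioi_add_comp_neg (integrable_exp_neg_mul_cosh_mul_exp hr ν), besselK,
    ← integral_const_mul]
  refine setIntegral_congr_fun measurableSet_Ioi fun t _ => ?_
  simp only [Real.cosh_neg, ofReal_neg, cosh, mul_neg]
  ring

lemma integral_comp_add_sub {E : Type*} [NormedAddCommGroup E] [NormedSpace ℝ E]
    (g : ℝ × ℝ → E) : ∫ p : ℝ × ℝ, g (p.1 + p.2, p.1 - p.2) = (2 : ℝ)⁻¹ • ∫ p, g p := by
  let L : (ℝ × ℝ) →ₗ[ℝ] ℝ × ℝ :=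
    (LinearMap.fst ℝ ℝ ℝ + LinearMap.snd ℝ ℝ ℝ).prod (LinearMap.fst ℝ ℝ ℝ - LinearMap.snd ℝ ℝ ℝ)
  have hdet : LinearMap.det L = -2 := by
    rw [← LinearMap.det_toMatrix (Module.Basis.finTwoProd ℝ), Matrix.det_fin_two]
    norm_num [L, LinearMap.toMatrix_apply]
  have hL : LinearMap.det L ≠ 0 := by norm_num [hdet]
  have hemb : MeasurableEmbedding L :=
    (L.equivOfDetNeZero hL).toContinuousLinearEquiv.toHomeomorph.measurableEmbedding
  rw [← show ∫ p, g (L p) = ∫ p : ℝ × ℝ, g (p.1 + p.2, p.1 - p.2) from rfl, ← hemb.integral_map,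
    Measure.map_linearMap_addHaar_eq_smul_addHaar volume hL, integral_smul_measure, hdet]
  norm_num

lemma besselK_mul_besselK (ν μ : ℂ) {r : ℝ} (hr : 0 < r) :
    besselK ν r * besselK μ r = 2⁻¹ * ∫ p : ℝ × ℝ,
      exp (-((2 * Real.cosh p.1 * Real.cosh p.2 : ℝ) * (r : ℂ))) *
        (exp ((ν + μ) * p.1) * exp ((ν - μ) * p.2)) := by
  set k : ℂ → ℝ → ℂ := fun ν t => exp (-(r : ℂ) * Real.cosh t) * exp (ν * t)
  have hprod : (∫ t, k ν t) * (∫ t, k μ t) =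
      2 * ∫ p : ℝ × ℝ, k ν (p.1 + p.2) * k μ (p.1 - p.2) := by
    rw [← integral_prod_mul, ← Measure.volume_eq_prod,
      integral_comp_add_sub (fun p : ℝ × ℝ => k ν p.1 * k μ p.2), real_smul, ofReal_inv,
      ofReal_ofNat, mul_inv_cancel_left₀ two_ne_zero]
  have hcosh (x y : ℝ) : Real.cosh (x + y) + Real.cosh (x - y) = 2 * Real.cosh x * Real.cosh y := by
    rw [Real.cosh_add, Real.cosh_sub]; ring
  rw [besselK_eq_half_integral ν hr, besselK_eq_half_integral μ hr, mul_mul_mul_comm, hprod,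
    ← mul_assoc, show (2⁻¹ * 2⁻¹ * 2 : ℂ) = 2⁻¹ by norm_num]
  congr 1
  refine integral_congr_ae (ae_of_all _ fun p => ?_)
  simp only [k, ← exp_add, ← hcosh]
  congr 1
  push_cast
  ring

lemma integral_cpow_mul_exp_neg_mul_Ioi' {s : ℂ} (hs : 0 < s.re) {c : ℝ} (hc : 0 < c) :
    ∫ r in Ioi (0 : ℝ), (r : ℂ) ^ (s - 1) * exp (-(c * r)) = Gamma s * (c : ℂ) ^ (-s) := by
  rw [integral_cpow_mul_exp_neg_mul_Ioi hs hc, mul_comm, one_div,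
    inv_cpow _ _ (by rw [arg_ofReal_of_nonneg hc.le]; exact Real.pi_ne_zero.symm), cpow_neg]

lemma integrableOn_rpow_mul_exp_neg_mul_Ioi {a c : ℝ} (ha : 0 < a) (hc : 0 < c) :
    IntegrableOn (fun r : ℝ => r ^ (a - 1) * Real.exp (-(c * r))) (Ioi 0) := by
  simpa only [Real.rpow_one, neg_mul] using
    integrableOn_rpow_mul_exp_neg_mul_rpow (p := 1) (s := a - 1) (by linarith) one_pos hc

lemma integral_Ioi_cpow_mul_integral_exp_neg_mul {X : Type*} [MeasurableSpace X]
    {μ : Measure X} [SFinite μ] {s : ℂ} (hs : 0 < s.re) {c : X → ℝ} (hc : ∀ x, 0 < c x)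
    (hcm : Measurable c) {g : X → ℂ} (hg : Integrable (fun x => (c x : ℂ) ^ (-s) * g x) μ) :
    ∫ r in Ioi (0 : ℝ), (r : ℂ) ^ (s - 1) * ∫ x, exp (-(c x * r)) * g x ∂μ =
      Gamma s * ∫ x, (c x : ℂ) ^ (-s) * g x ∂μ := by
  set F : ℝ × X → ℂ := fun q => (q.1 : ℂ) ^ (s - 1) * exp (-(c q.2 * q.1)) * g q.2
  have hgm : AEStronglyMeasurable g μ := by
    refine ((hcm.complex_ofReal.pow_const s).aestronglyMeasurable.mul hg.1).congr
      (ae_of_all _ fun x => ?_)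
    have hcx : (c x : ℂ) ≠ 0 := ofReal_ne_zero.2 (hc x).ne'
    simp only [Pi.mul_apply, cpow_neg, mul_inv_cancel_left₀ (cpow_ne_zero_iff.2 (.inl hcx))]
  have hnorm (x : X) {r : ℝ} (hr : 0 < r) :
      ‖F (r, x)‖ = r ^ (s.re - 1) * Real.exp (-(c x * r)) * ‖g x‖ := by
    simp only [F, norm_mul, norm_cpow_eq_rpow_re_of_pos hr, norm_exp, sub_re, one_re, neg_re,
      ← ofReal_mul, ofReal_re]
  have hF : Integrable F ((volume.restrict (Ioi 0)).prod μ) := by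
    have hFm : AEStronglyMeasurable F ((volume.restrict (Ioi 0)).prod μ) :=
      (Measurable.aestronglyMeasurable (by fun_prop)).mul hgm.comp_snd
    rw [integrable_prod_iff' hFm]
    refine ⟨?_, ?_⟩
    · filter_upwards [hFm.prodMk_right] with x hx
      refine ((integrableOn_rpow_mul_exp_neg_mul_Ioi hs (hc x)).mul_const ‖g x‖).mono' hx ?_
      filter_upwards [ae_restrict_mem measurableSet_Ioi] with r hr
      exact (hnorm x hr).le
    · refine (hg.norm.const_mul (Real.Gamma s.re)).congr (ae_of_all _ fun x => ?_)
      have hcx := hc x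
      dsimp only
      rw [setIntegral_congr_fun measurableSet_Ioi (fun r hr => hnorm x hr), integral_mul_const,
        Real.integral_rpow_mul_exp_neg_mul_Ioi hs hcx, norm_mul, norm_cpow_eq_rpow_re_of_pos hcx,
        neg_re, one_div, Real.inv_rpow hcx.le, Real.rpow_neg hcx.le]
      ring
  calc ∫ r in Ioi (0 : ℝ), (r : ℂ) ^ (s - 1) * ∫ x, exp (-(c x * r)) * g x ∂μ
      = ∫ r in Ioi (0 : ℝ), ∫ x, F (r, x) ∂μ := by
        simp only [F, mul_assoc, integral_const_mul]
    _ = ∫ x, (∫ r in Ioi (0 : ℝ), F (r, x)) ∂μ := integral_integral_swap hF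
    _ = ∫ x, Gamma s * ((c x : ℂ) ^ (-s) * g x) ∂μ := by
        refine integral_congr_ae (ae_of_all _ fun x => ?_)
        simp only [F]
        rw [integral_mul_const, integral_cpow_mul_exp_neg_mul_Ioi' hs (hc x), mul_assoc]
    _ = Gamma s * ∫ x, (c x : ℂ) ^ (-s) * g x ∂μ := integral_const_mul _ _

theorem Gamma_mul_integral_besselK_mul_besselK_mul_cpow {ν μ s : ℂ}
    (h₁ : |(ν + μ).re| < s.re) (h₂ : |(ν - μ).re| < s.re) :
    Gamma s * ∫ r in Ioi (0 : ℝ), besselK ν r * besselK μ r * (r : ℂ) ^ (s - 1) =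
      2 ^ (s - 3) * (Gamma ((s + (ν + μ)) / 2) * Gamma ((s - (ν + μ)) / 2)) *
        (Gamma ((s + (ν - μ)) / 2) * Gamma ((s - (ν - μ)) / 2)) := by
  have hs : 0 < s.re := (abs_nonneg _).trans_lt h₁
  set J : ℂ → ℂ := fun a => ∫ x : ℝ, exp (a * x) * (Real.cosh x : ℂ) ^ (-s)
  have hsplit (p : ℝ × ℝ) :
      ((2 * Real.cosh p.1 * Real.cosh p.2 : ℝ) : ℂ) ^ (-s) *
          (exp ((ν + μ) * p.1) * exp ((ν - μ) * p.2)) =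
        2 ^ (-s) * ((exp ((ν + μ) * p.1) * (Real.cosh p.1 : ℂ) ^ (-s)) *
          (exp ((ν - μ) * p.2) * (Real.cosh p.2 : ℂ) ^ (-s))) := by
    rw [ofReal_mul, mul_cpow_ofReal_nonneg (by positivity) (Real.cosh_pos _).le, ofReal_mul,
      mul_cpow_ofReal_nonneg zero_le_two (Real.cosh_pos _).le, ofReal_ofNat]
    ring
  have hint : Integrable fun p : ℝ × ℝ => ((2 * Real.cosh p.1 * Real.cosh p.2 : ℝ) : ℂ) ^ (-s) *
      (exp ((ν + μ) * p.1) * exp ((ν - μ) * p.2)) := by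
    simp_rw [hsplit, Measure.volume_eq_prod]
    exact ((integrable_exp_mul_cosh_cpow h₁).mul_prod (integrable_exp_mul_cosh_cpow h₂)).const_mul _
  have hpow : (2⁻¹ : ℂ) * 2 ^ (-s) * (2 ^ (s - 1) * 2 ^ (s - 1)) = 2 ^ (s - 3) := by
    rw [← cpow_neg_one, ← cpow_add _ _ two_ne_zero, ← cpow_add _ _ two_ne_zero,
      ← cpow_add _ _ two_ne_zero]
    congr 1
    ring
  calc Gamma s * ∫ r in Ioi (0 : ℝ), besselK ν r * besselK μ r * (r : ℂ) ^ (s - 1)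
      = Gamma s * (2⁻¹ * ∫ r in Ioi (0 : ℝ), (r : ℂ) ^ (s - 1) * ∫ p : ℝ × ℝ,
          exp (-((2 * Real.cosh p.1 * Real.cosh p.2 : ℝ) * r)) *
            (exp ((ν + μ) * p.1) * exp ((ν - μ) * p.2))) := by
        congr 1
        rw [← integral_const_mul]
        refine setIntegral_congr_fun measurableSet_Ioi fun r hr => ?_
        rw [besselK_mul_besselK ν μ hr]
        ring
    _ = 2⁻¹ * 2 ^ (-s) * (Gamma s * J (ν + μ)) * (Gamma s * J (ν - μ)) := by
        rw [integral_Ioi_cpow_mul_integral_exp_neg_mul hs (fun p => by positivity) (by fun_prop)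
          hint]
        simp_rw [hsplit]
        rw [integral_const_mul, Measure.volume_eq_prod,
          integral_prod_mul (fun x : ℝ => exp ((ν + μ) * x) * (Real.cosh x : ℂ) ^ (-s))
            (fun x : ℝ => exp ((ν - μ) * x) * (Real.cosh x : ℂ) ^ (-s))]
        ring
    _ = _ := by
        rw [Gamma_mul_integral_exp_mul_cosh_cpow h₁, Gamma_mul_integral_exp_mul_cosh_cpow h₂,
          ← hpow]
        ring

/-- For `ν, μ, ρ ∈ ℂ` with `Re(1 ± ν ± μ - ρ) > 0` (all four sign choices),
`2^{ρ+2} Γ(1-ρ) ∫_0^∞ K_ν(r) K_μ(r) r^{-ρ} dr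
  = Γ((1+ν+μ-ρ)/2) Γ((1+ν-μ-ρ)/2) Γ((1-ν+μ-ρ)/2) Γ((1-ν-μ-ρ)/2)`. -/
theorem stmt7 (ν μ ρ : ℂ)
    (h1 : 0 < (1 + ν + μ - ρ).re) (h2 : 0 < (1 + ν - μ - ρ).re)
    (h3 : 0 < (1 - ν + μ - ρ).re) (h4 : 0 < (1 - ν - μ - ρ).re) :
    (2 : ℂ) ^ (ρ + 2) * Complex.Gamma (1 - ρ) *
        ∫ r in Set.Ioi (0 : ℝ), besselK ν r * besselK μ r * (r : ℂ) ^ (-ρ) =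
      Complex.Gamma ((1 + ν + μ - ρ) / 2) * Complex.Gamma ((1 + ν - μ - ρ) / 2) *
        Complex.Gamma ((1 - ν + μ - ρ) / 2) * Complex.Gamma ((1 - ν - μ - ρ) / 2) := by
  simp only [add_re, sub_re, one_re] at h1 h2 h3 h4
  have hsum : |(ν + μ).re| < (1 - ρ).re := by
    rw [add_re, sub_re, one_re, abs_lt]; constructor <;> linarith
  have hdiff : |(ν - μ).re| < (1 - ρ).re := by
    rw [sub_re, sub_re, one_re, abs_lt]; constructor <;> linarith
  have key := Gamma_mul_integral_besselK_mul_besselK_mul_cpow hsum hdiff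
  rw [sub_sub_cancel_left] at key
  have hpow : (2 : ℂ) ^ (ρ + 2) * 2 ^ (1 - ρ - 3) = 1 := by
    rw [← cpow_add _ _ two_ne_zero, show ρ + 2 + (1 - ρ - 3) = 0 by ring, cpow_zero]
  rw [mul_assoc, key,
    show (1 - ρ + (ν + μ)) / 2 = (1 + ν + μ - ρ) / 2 by ring,
    show (1 - ρ - (ν + μ)) / 2 = (1 - ν - μ - ρ) / 2 by ring,
    show (1 - ρ + (ν - μ)) / 2 = (1 + ν - μ - ρ) / 2 by ring,
    show (1 - ρ - (ν - μ)) / 2 = (1 - ν + μ - ρ) / 2 by ring]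
  linear_combination Gamma ((1 + ν + μ - ρ) / 2) * Gamma ((1 + ν - μ - ρ) / 2) *
    Gamma ((1 - ν + μ - ρ) / 2) * Gamma ((1 - ν - μ - ρ) / 2) * hpow
end
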